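/- arXiv:1412.1711 — 2 statements merged into one kernel-verified Lean document; each statement's English description precedes it below -/
import Mathlib

section
/- Let (Ω, 𝔄, P) be a probability space, Λ ∈ L²(P; ℝ^k) with E[Λ] = 0, and let G be a closed linear subspace of L²(P) with E[g] = 0 for all g ∈ G. Let π_G be the orthogonal projection onto G (applied coordinatewise), set 𝒥 = E[(Λ − π_G Λ)(Λ − π_G Λ)ᵀ], assume 𝒥 is positive definite, and define the canonical influence curve ϱ = 𝒥⁻¹(Λ − π_G Λ). Then: (a) 𝒥 = E[(Λ − π_G Λ)Λᵀ] = E[ΛΛᵀ] − E[(π_G Λ)(π_G Λ)ᵀ]; (b) ϱ ∈ Ψ, where Ψ = {ψ ∈ L²(P; ℝ^k) : E[ψ] = 0, E[ψΛᵀ] = I_k, E[ψ g] = 0 ∀g ∈ G}; and (c) for every ψ ∈ Ψ, the coordinatewise orthogonal projection of ψ onto the closed subspace span{Λ₁, …, Λ_k} + G of L²(P) equals ϱ. -/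
/-!
Everything happens in the Hilbert space `L²(P)`, where `∫ f g dP = ⟪f, g⟫` and `∫ f dP = ⟪1, f⟫`.
The residuals `Λ i - π_G Λ i` lie in `Gᗮ`, which turns both formulas for `𝒥` into one-line
computations and makes `𝒥` the matrix `⟪Λ i - π_G Λ i, Λ j⟫`; hence `⟪ϱ i, Λ j⟫ = (𝒥⁻¹ 𝒥) i j`.
As a combination of residuals, `ϱ i` lies in `Gᗮ` and in `span Λ ⊔ G`, which is orthogonal
to the constant `1`. Finally, for `ψ ∈ Ψ` the difference `ψ i - ϱ i` is orthogonal to every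
`Λ j` and to `G`, hence to `span Λ ⊔ G`.
-/

open MeasureTheory RealInnerProductSpace

namespace MeasureTheory.L2

variable {Ω : Type*} [MeasurableSpace Ω] {P : Measure Ω}

theorem integral_mul_eq_inner_of_ae {f g : Lp ℝ 2 P} {f' g' : Ω → ℝ} (hf : f =ᵐ[P] f')
    (hg : g =ᵐ[P] g') : ∫ x, f' x * g' x ∂P = ⟪f, g⟫ := by
  rw [inner_def]
  refine integral_congr_ae ?_
  filter_upwards [hf, hg] with x hfx hgx
  simp [hfx, hgx, mul_comm]

theorem integral_mul_eq_inner (f g : Lp ℝ 2 P) : ∫ x, f x * g x ∂P = ⟪f, g⟫ :=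
  integral_mul_eq_inner_of_ae .rfl .rfl

theorem integral_sub_mul_eq_inner (f f' g : Lp ℝ 2 P) :
    ∫ x, (f x - f' x) * g x ∂P = ⟪f - f', g⟫ :=
  integral_mul_eq_inner_of_ae (Lp.coeFn_sub f f') .rfl

theorem integral_sub_mul_sub_eq_inner (f f' g g' : Lp ℝ 2 P) :
    ∫ x, (f x - f' x) * (g x - g' x) ∂P = ⟪f - f', g - g'⟫ :=
  integral_mul_eq_inner_of_ae (Lp.coeFn_sub f f') (Lp.coeFn_sub g g')

theorem integral_eq_inner_const_one [IsFiniteMeasure P] (f : Lp ℝ 2 P) :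
    ∫ x, f x ∂P = ⟪Lp.const 2 P (1 : ℝ), f⟫ := by
  rw [← integral_mul_eq_inner_of_ae (Lp.coeFn_const 2 P (1 : ℝ)) .rfl]
  simp

end MeasureTheory.L2

section Residual

variable {E : Type*} [NormedAddCommGroup E] [InnerProductSpace ℝ E] {G : Submodule ℝ E}

theorem inner_sub_right_of_mem_orthogonal {r u w : E} (hr : r ∈ Gᗮ) (hw : w ∈ G) :
    ⟪r, u - w⟫ = ⟪r, u⟫ := by
  rw [inner_sub_right, G.inner_left_of_mem_orthogonal hw hr, sub_zero]

theorem inner_sub_left_eq_sub_inner_of_sub_mem_orthogonal {u w u' w' : E} (hw : w ∈ G)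
    (hr : u' - w' ∈ Gᗮ) : ⟪u - w, u'⟫ = ⟪u, u'⟫ - ⟪w, w'⟫ := by
  have hww' : ⟪w, u'⟫ = ⟪w, w'⟫ := by
    rw [← sub_eq_zero, ← inner_sub_right, G.inner_right_of_mem_orthogonal hw hr]
  rw [inner_sub_left, hww']

theorem inner_sum_smul_eq_mul_apply {m n p : Type*} [Fintype n] (A : Matrix m n ℝ)
    (B : Matrix n p ℝ) (r : n → E) (Λ : p → E) (hB : ∀ j l, B j l = ⟪r j, Λ l⟫)
    (i : m) (l : p) :
    ⟪∑ j, A i j • r j, Λ l⟫ = (A * B) i l := by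
  simp only [sum_inner, real_inner_smul_left, Matrix.mul_apply, hB]

theorem sum_smul_sub_mem_span_range_sup {ι : Type*} [Fintype ι] {Λ π : ι → E}
    (hπ : ∀ j, π j ∈ G) (c : ι → ℝ) :
    ∑ j, c j • (Λ j - π j) ∈ Submodule.span ℝ (Set.range Λ) ⊔ G :=
  Submodule.sum_mem _ fun j _ => Submodule.smul_mem _ _ <| Submodule.sub_mem _
    (Submodule.mem_sup_left (Submodule.subset_span ⟨j, rfl⟩))
    (Submodule.mem_sup_right (hπ j))

theorem mem_orthogonal_span_range_sup {ι : Type*} {Λ : ι → E} {v : E}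
    (hΛ : ∀ j, ⟪v, Λ j⟫ = 0) (hG : v ∈ Gᗮ) : v ∈ (Submodule.span ℝ (Set.range Λ) ⊔ G)ᗮ := by
  rw [← Submodule.inf_orthogonal]
  refine Submodule.mem_inf.2 ⟨?_, hG⟩
  rw [Submodule.mem_orthogonal']
  intro u hu
  induction hu using Submodule.span_induction with
  | mem _ h => obtain ⟨j, rfl⟩ := h; exact hΛ j
  | zero => exact inner_zero_right v
  | add _ _ _ _ h₁ h₂ => rw [inner_add_right, h₁, h₂, add_zero]
  | smul _ _ _ h => rw [real_inner_smul_right, h, mul_zero]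

end Residual

theorem canonical_influence_curve_properties_general
    {Ω : Type*} [MeasurableSpace Ω] (P : Measure Ω) [IsProbabilityMeasure P]
    (k : ℕ) (Λ : Fin k → Lp ℝ 2 P) (hcent : ∀ i, ∫ x, Λ i x ∂P = 0)
    (G : Submodule ℝ (Lp ℝ 2 P))
    (hGcent : ∀ g ∈ G, ∫ x, g x ∂P = 0)
    (πΛ : Fin k → Lp ℝ 2 P)
    (hπmem : ∀ i, πΛ i ∈ G)
    (hπorth : ∀ i, ∀ g ∈ G, ∫ x, (Λ i x - πΛ i x) * g x ∂P = 0)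
    (𝒥 : Matrix (Fin k) (Fin k) ℝ)
    (hJ : ∀ i j, 𝒥 i j = ∫ x, (Λ i x - πΛ i x) * (Λ j x - πΛ j x) ∂P)
    (hJpos : 𝒥.PosDef)
    (ϱ : Fin k → Lp ℝ 2 P)
    (hϱ : ∀ i, ϱ i = ∑ j, 𝒥⁻¹ i j • (Λ j - πΛ j))
    (Ψ : Set (Fin k → Lp ℝ 2 P))
    (hΨ : Ψ = {ψ | (∀ i, ∫ x, ψ i x ∂P = 0) ∧
      (∀ i j, (∫ x, ψ i x * Λ j x ∂P) = if i = j then 1 else 0) ∧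
      (∀ g ∈ G, ∀ i, ∫ x, ψ i x * g x ∂P = 0)}) :
    (∀ i j, 𝒥 i j = ∫ x, (Λ i x - πΛ i x) * Λ j x ∂P) ∧
    (∀ i j, 𝒥 i j = (∫ x, Λ i x * Λ j x ∂P) - ∫ x, πΛ i x * πΛ j x ∂P) ∧
    ϱ ∈ Ψ ∧
    (∀ ψ ∈ Ψ, ∀ i,
      ϱ i ∈ (Submodule.span ℝ (Set.range Λ)) ⊔ G ∧
      ∀ g ∈ (Submodule.span ℝ (Set.range Λ)) ⊔ G,
        ∫ x, (ψ i x - ϱ i x) * g x ∂P = 0) := by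
  simp only [L2.integral_sub_mul_sub_eq_inner, L2.integral_sub_mul_eq_inner,
    L2.integral_mul_eq_inner, L2.integral_eq_inner_const_one] at hcent hGcent hπorth hJ hΨ ⊢
  set one : Lp ℝ 2 P := Lp.const 2 P 1
  have hres : ∀ i, Λ i - πΛ i ∈ Gᗮ := fun i => (G.mem_orthogonal' _).2 (hπorth i)
  have hJΛ : ∀ i j, 𝒥 i j = ⟪Λ i - πΛ i, Λ j⟫ := fun i j =>
    (hJ i j).trans (inner_sub_right_of_mem_orthogonal (hres i) (hπmem j))
  have hϱmem : ∀ i, ϱ i ∈ Submodule.span ℝ (Set.range Λ) ⊔ G := fun i =>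
    hϱ i ▸ sum_smul_sub_mem_span_range_sup hπmem _
  have hϱG : ∀ i, ϱ i ∈ Gᗮ := fun i =>
    hϱ i ▸ Submodule.sum_mem _ fun j _ => Submodule.smul_mem _ _ (hres j)
  have hϱΛ : ∀ i j, ⟪ϱ i, Λ j⟫ = if i = j then 1 else 0 := fun i j => by
    rw [hϱ i, inner_sum_smul_eq_mul_apply _ _ _ _ hJΛ,
      Matrix.nonsing_inv_mul _ ((Matrix.isUnit_iff_isUnit_det _).1 hJpos.isUnit), Matrix.one_apply]
  have hone : one ∈ (Submodule.span ℝ (Set.range Λ) ⊔ G)ᗮ :=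
    mem_orthogonal_span_range_sup hcent ((G.mem_orthogonal' _).2 hGcent)
  subst hΨ
  refine ⟨hJΛ, fun i j => (hJΛ i j).trans
      (inner_sub_left_eq_sub_inner_of_sub_mem_orthogonal (hπmem i) (hres j)),
    ⟨fun i => Submodule.inner_left_of_mem_orthogonal (hϱmem i) hone, hϱΛ,
      fun g hg i => Submodule.inner_left_of_mem_orthogonal hg (hϱG i)⟩, ?_⟩
  rintro ψ ⟨-, hψΛ, hψG⟩ i
  have hψG' : ψ i ∈ Gᗮ := (G.mem_orthogonal' _).2 fun g hg => hψG g hg i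
  have hdiff : ψ i - ϱ i ∈ (Submodule.span ℝ (Set.range Λ) ⊔ G)ᗮ :=
    mem_orthogonal_span_range_sup (fun j => by rw [inner_sub_left, hψΛ, hϱΛ, sub_self])
      (Gᗮ.sub_mem hψG' (hϱG i))
  exact ⟨hϱmem i, fun g hg => Submodule.inner_left_of_mem_orthogonal hg hdiff⟩

/-- the canonical influence curve `ϱ = 𝒥⁻¹(Λ − π_G Λ)`:
(a) two expressions for the Fisher information `𝒥`; (b) `ϱ` is an influence
curve; (c) every influence curve projects (coordinatewise, orthogonally)
onto `ϱ` in the closed subspace `span{Λ₁,…,Λ_k} + G`. -/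
theorem canonical_influence_curve_properties
    {Ω : Type*} [MeasurableSpace Ω] (P : Measure Ω) [IsProbabilityMeasure P]
    (k : ℕ) (Λ : Fin k → Lp ℝ 2 P) (hcent : ∀ i, ∫ x, Λ i x ∂P = 0)
    (G : Submodule ℝ (Lp ℝ 2 P)) (hGclosed : IsClosed (G : Set (Lp ℝ 2 P)))
    (hGcent : ∀ g ∈ G, ∫ x, g x ∂P = 0)
    (πΛ : Fin k → Lp ℝ 2 P)
    (hπmem : ∀ i, πΛ i ∈ G)
    (hπorth : ∀ i, ∀ g ∈ G, ∫ x, (Λ i x - πΛ i x) * g x ∂P = 0)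
    (𝒥 : Matrix (Fin k) (Fin k) ℝ)
    (hJ : ∀ i j, 𝒥 i j = ∫ x, (Λ i x - πΛ i x) * (Λ j x - πΛ j x) ∂P)
    (hJpos : 𝒥.PosDef)
    (ϱ : Fin k → Lp ℝ 2 P)
    (hϱ : ∀ i, ϱ i = ∑ j, 𝒥⁻¹ i j • (Λ j - πΛ j))
    (Ψ : Set (Fin k → Lp ℝ 2 P))
    (hΨ : Ψ = {ψ | (∀ i, ∫ x, ψ i x ∂P = 0) ∧
      (∀ i j, (∫ x, ψ i x * Λ j x ∂P) = if i = j then 1 else 0) ∧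
      (∀ g ∈ G, ∀ i, ∫ x, ψ i x * g x ∂P = 0)}) :
    (∀ i j, 𝒥 i j = ∫ x, (Λ i x - πΛ i x) * Λ j x ∂P) ∧
    (∀ i j, 𝒥 i j = (∫ x, Λ i x * Λ j x ∂P) - ∫ x, πΛ i x * πΛ j x ∂P) ∧
    ϱ ∈ Ψ ∧
    (∀ ψ ∈ Ψ, ∀ i,
      ϱ i ∈ (Submodule.span ℝ (Set.range Λ)) ⊔ G ∧
      ∀ g ∈ (Submodule.span ℝ (Set.range Λ)) ⊔ G,
        ∫ x, (ψ i x - ϱ i x) * g x ∂P = 0) :=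
  canonical_influence_curve_properties_general P k Λ hcent G hGcent πΛ hπmem hπorth 𝒥 hJ hJpos ϱ hϱ
    Ψ hΨ
end

section
/- Let (Ω, 𝔄, P) be a probability space, Λ ∈ L²(P) with E[Λ] = 0, τ > 0, r₀, r₁ > 0, and set z = (r₁ − r₀)/τ. Assume the radius condition r₀ < E[(τΛ − (r₁ − r₀))₊], which is equivalent to r₁ < E[((r₁ − r₀) − τΛ)₊]. Then there exist unique reals c′ < z < c″ with τE[(c′ − Λ)₊] = r₁ and τE[(Λ − c″)₊] = r₀. Let G_c = {g ∈ L²(P) : E[g] = 0, g ≥ −1 P-a.e.}, G₀ = r₀G_c, and G₁ = τΛ + r₁G_c. Then G₀ and G₁ are disjoint, the minimum-norm element of G₁ − G₀ is τ(c′ ∨ Λ ∧ c″) − (r₁ − r₀), and the unique pair (q₀, q₁) ∈ G₀ × G₁ with q₁ − q₀ equal to this minimum-norm element is q₀ = τ(Λ − c″)₊ − r₀ and q₁ = τ(Λ ∨ c′) − r₁. -/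
/-!
Both tangent sets are sets of centred `L²` functions lying above a floor: `G₀` above `-r₀` and
`G₁` above `τΛ - r₁`. An element of both lies above the larger floor, whose mean exceeds `0`
exactly under the radius condition, so the sets are disjoint.

The clipped pair satisfies complementary slackness: `d = q₁ - q₀ = τ(c′ ∨ Λ ∧ c″) - (r₁ - r₀)`
exceeds its minimum `τc′ - (r₁ - r₀)` only where `q₁` sits on its floor and falls below its
maximum `τc″ - (r₁ - r₀)` only where `q₀` does. Since `p₁ - q₁` and `q₀ - p₀` are centred, the
constants can be subtracted from `d` inside the inner products, which gives
`⟪d, (p₁ - p₀) - d⟫ ≥ 0` and hence `‖d‖ ≤ ‖p₁ - p₀‖`. At every point one of `q₀, q₁` is on its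
floor, so `p₁ - p₀ = d` makes `p₁ - q₁ = p₀ - q₀` nonnegative and centred, hence zero.

The clipping levels exist and are unique because `c ↦ E[(c - Λ)₊]` is continuous, tends to `0`
at `-∞`, and is strictly increasing where it is positive.
-/

open MeasureTheory Filter Topology

lemma max_sub_max_sub_zero_eq_max_min {a c' c'' : ℝ} (h : c' ≤ c'') :
    max a c' - max (a - c'') 0 = max c' (min a c'') := by
  simp only [max_def, min_def]
  split_ifs <;> linarith

section PositivePart

variable {Ω : Type*} [MeasurableSpace Ω] {P : Measure Ω}

lemma integral_max_zero_eq_integral_max_neg_zero_add {f : Ω → ℝ} (hf : Integrable f P) :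
    ∫ x, max (f x) 0 ∂P = ∫ x, max (-f x) 0 ∂P + ∫ x, f x ∂P := by
  rw [← integral_add (f := fun x => max (-f x) 0) hf.neg.pos_part hf]
  exact integral_congr_ae (Eventually.of_forall fun x =>
    eq_add_of_sub_eq' (max_zero_sub_max_neg_zero_eq_self (f x)))

lemma mul_integral_max_zero {τ : ℝ} (hτ : 0 ≤ τ) (f : Ω → ℝ) :
    τ * ∫ x, max (f x) 0 ∂P = ∫ x, max (τ * f x) 0 ∂P := by
  rw [← integral_const_mul]
  simp only [mul_max_of_nonneg _ _ hτ, mul_zero]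

end PositivePart

section LowerPartialMoment

variable {Ω : Type*} [MeasurableSpace Ω] {P : Measure Ω} {ℓ : Ω → ℝ}

variable (P ℓ) in
noncomputable def lowerPartialMoment (c : ℝ) : ℝ :=
  ∫ x, max (c - ℓ x) 0 ∂P

lemma integrable_max_sub_zero [IsFiniteMeasure P] (hℓ : Integrable ℓ P) (c : ℝ) :
    Integrable (fun x => max (c - ℓ x) 0) P :=
  ((integrable_const c).sub hℓ).pos_part

lemma monotone_lowerPartialMoment [IsFiniteMeasure P] (hℓ : Integrable ℓ P) :
    Monotone (lowerPartialMoment P ℓ) := fun a b hab =>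
  integral_mono (integrable_max_sub_zero hℓ a) (integrable_max_sub_zero hℓ b) fun _ =>
    max_le_max (by linarith) le_rfl

lemma lipschitzWith_lowerPartialMoment [IsProbabilityMeasure P] (hℓ : Integrable ℓ P) :
    LipschitzWith 1 (lowerPartialMoment P ℓ) := by
  refine LipschitzWith.of_dist_le_mul fun a b => ?_
  rw [NNReal.coe_one, one_mul, Real.dist_eq, Real.dist_eq, lowerPartialMoment,
    lowerPartialMoment, ← integral_sub (integrable_max_sub_zero hℓ a)
      (integrable_max_sub_zero hℓ b), ← Real.norm_eq_abs]
  refine (norm_integral_le_of_norm_le_const (C := |a - b|)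
    (Eventually.of_forall fun x => ?_)).trans_eq (by simp)
  simpa using abs_max_sub_max_le_abs (a - ℓ x) (b - ℓ x) 0

lemma lowerPartialMoment_lt_of_lt [IsFiniteMeasure P] (hℓ : Integrable ℓ P) {a b : ℝ}
    (hab : a < b) (ha : 0 < lowerPartialMoment P ℓ a) :
    lowerPartialMoment P ℓ a < lowerPartialMoment P ℓ b := by
  refine (monotone_lowerPartialMoment hℓ hab.le).lt_of_ne fun heq => ha.ne' ?_
  have hle : (fun x => max (a - ℓ x) 0) ≤ᵐ[P] fun x => max (b - ℓ x) 0 :=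
    Eventually.of_forall fun x => max_le_max (by linarith) le_rfl
  have hae := (integral_eq_iff_of_ae_le (integrable_max_sub_zero hℓ a)
    (integrable_max_sub_zero hℓ b) hle).mp heq
  -- wherever `ℓ x < a`, the two positive parts differ by `b - a > 0`
  have hzero : (fun x => max (a - ℓ x) 0) =ᵐ[P] 0 := by
    filter_upwards [hae] with x hx
    by_contra hne
    have hpos : 0 < a - ℓ x := by
      by_contra h
      exact hne (max_eq_right (not_lt.mp h))
    rw [max_eq_left hpos.le, max_eq_left (by linarith)] at hx
    linarith
  simpa [lowerPartialMoment] using integral_congr_ae hzero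

lemma tendsto_lowerPartialMoment_atBot [IsFiniteMeasure P] (hℓ : Integrable ℓ P) :
    Tendsto (lowerPartialMoment P ℓ) atBot (𝓝 0) := by
  have hlim := tendsto_integral_filter_of_dominated_convergence (μ := P) (l := atBot)
    (F := fun c x => max (c - ℓ x) 0) (f := 0) (fun x => max (-ℓ x) 0)
    (Eventually.of_forall fun c => (integrable_max_sub_zero hℓ c).aestronglyMeasurable)
    (eventually_le_atBot 0 |>.mono fun c hc => Eventually.of_forall fun x => by
      rw [Real.norm_of_nonneg (le_max_right _ _)]
      exact max_le_max (by linarith) le_rfl)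
    hℓ.neg.pos_part
    (Eventually.of_forall fun x => tendsto_const_nhds.congr' <|
      (eventually_le_atBot (ℓ x)).mono fun c hc => (max_eq_right (by linarith)).symm)
  simp only [Pi.zero_apply, integral_zero] at hlim
  exact hlim

theorem existsUnique_lowerPartialMoment_eq [IsProbabilityMeasure P] (hℓ : Integrable ℓ P)
    {R Z : ℝ} (hR : 0 < R) (hZ : R < lowerPartialMoment P ℓ Z) :
    ∃! c, c < Z ∧ lowerPartialMoment P ℓ c = R := by
  obtain ⟨c₀, hc₀⟩ := ((tendsto_lowerPartialMoment_atBot hℓ).eventually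
    (gt_mem_nhds hR)).exists_forall_of_atBot
  have hc₀Z : min c₀ Z < Z := by
    refine lt_of_le_of_ne (min_le_right _ _) fun h => ?_
    have := hc₀ (min c₀ Z) (min_le_left _ _)
    rw [h] at this
    linarith
  obtain ⟨c, hc, hcR⟩ := intermediate_value_Icc hc₀Z.le
    (lipschitzWith_lowerPartialMoment hℓ).continuous.continuousOn
    ⟨(hc₀ _ (min_le_left _ _)).le, hZ.le⟩
  have hcZ : c < Z := lt_of_le_of_ne hc.2 fun h => by rw [h] at hcR; linarith
  refine ⟨c, ⟨hcZ, hcR⟩, fun y ⟨_, hyR⟩ => ?_⟩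
  rcases lt_trichotomy y c with h | h | h
  · exact absurd (hyR.trans hcR.symm) (lowerPartialMoment_lt_of_lt hℓ h (hyR ▸ hR)).ne
  · exact h
  · exact absurd (hcR.trans hyR.symm) (lowerPartialMoment_lt_of_lt hℓ h (hcR ▸ hR)).ne

lemma existsUnique_mul_lowerPartialMoment_eq [IsProbabilityMeasure P] (hℓ : Integrable ℓ P)
    {τ R Z : ℝ} (hτ : 0 < τ) (hR : 0 < R) (hZ : R < τ * ∫ x, max (Z - ℓ x) 0 ∂P) :
    ∃! c, c < Z ∧ τ * ∫ x, max (c - ℓ x) 0 ∂P = R := by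
  have hscale : ∀ c, τ * ∫ x, max (c - ℓ x) 0 ∂P = R ↔ lowerPartialMoment P ℓ c = R / τ :=
    fun c => by rw [eq_div_iff hτ.ne', mul_comm, lowerPartialMoment]
  simp only [hscale]
  exact existsUnique_lowerPartialMoment_eq hℓ (div_pos hR hτ) (by rwa [div_lt_iff₀' hτ])

lemma existsUnique_mul_upperPartialMoment_eq [IsProbabilityMeasure P] (hℓ : Integrable ℓ P)
    {τ R Z : ℝ} (hτ : 0 < τ) (hR : 0 < R) (hZ : R < τ * ∫ x, max (ℓ x - Z) 0 ∂P) :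
    ∃! c, Z < c ∧ τ * ∫ x, max (ℓ x - c) 0 ∂P = R := by
  have h := existsUnique_mul_lowerPartialMoment_eq hℓ.neg hτ hR (Z := -Z)
    (by simpa only [Pi.neg_apply, sub_neg_eq_add, neg_add_eq_sub] using hZ)
  refine ((Equiv.neg ℝ).existsUnique_congr fun c => ?_).mp h
  simp only [Equiv.neg_apply, Pi.neg_apply, sub_neg_eq_add, lt_neg, add_comm]

end LowerPartialMoment

lemma norm_le_norm_of_inner_sub_nonneg {E : Type*} [NormedAddCommGroup E] [InnerProductSpace ℝ E]
    {u v : E} (h : 0 ≤ inner ℝ u (v - u)) : ‖u‖ ≤ ‖v‖ := by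
  rw [inner_sub_right, real_inner_self_eq_norm_sq, sub_nonneg] at h
  nlinarith [real_inner_le_norm u v, norm_nonneg u, norm_nonneg v]

section FloorSet

variable {Ω : Type*} [MeasurableSpace Ω] {P : Measure Ω}

lemma integral_coeFn_smul (c : ℝ) (f : Lp ℝ 2 P) : ∫ x, (c • f) x ∂P = c * ∫ x, f x ∂P := by
  rw [integral_congr_ae (Lp.coeFn_smul c f), ← integral_const_mul]
  rfl

lemma inner_eq_integral_mul (f g : Lp ℝ 2 P) : inner ℝ f g = ∫ x, f x * g x ∂P := by
  simp only [L2.inner_def, Real.inner_apply]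

lemma integrable_mul_of_L2 (f g : Lp ℝ 2 P) : Integrable (fun x => f x * g x) P := by
  simpa only [Real.inner_apply] using L2.integrable_inner (𝕜 := ℝ) f g

variable (P) in
def floorSet (m : ℝ) (φ : Ω → ℝ) : Set (Lp ℝ 2 P) :=
  {h | ∫ x, h x ∂P = m ∧ ∀ᵐ x ∂P, φ x ≤ h x}

lemma smul_tangentBall_eq_floorSet {r : ℝ} (hr : 0 < r) :
    {h : Lp ℝ 2 P | ∃ g ∈ {g : Lp ℝ 2 P | (∫ x, g x ∂P) = 0 ∧ ∀ᵐ x ∂P, -1 ≤ g x}, h = r • g} =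
      floorSet P 0 (fun _ => -r) := by
  ext h
  simp only [floorSet, Set.mem_ofPred_eq]
  constructor
  · rintro ⟨g, ⟨hg, hg₁⟩, rfl⟩
    refine ⟨by rw [integral_coeFn_smul, hg, mul_zero], ?_⟩
    filter_upwards [Lp.coeFn_smul r g, hg₁] with x e hx
    rw [e, Pi.smul_apply, smul_eq_mul]
    nlinarith
  · rintro ⟨hh, hh₁⟩
    refine ⟨r⁻¹ • h, ⟨by rw [integral_coeFn_smul, hh, mul_zero], ?_⟩,
      (smul_inv_smul₀ hr.ne' h).symm⟩
    filter_upwards [Lp.coeFn_smul r⁻¹ h, hh₁] with x e hx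
    rw [e, Pi.smul_apply, smul_eq_mul, le_inv_mul_iff₀ hr]
    linarith

variable [IsFiniteMeasure P]

lemma integral_coeFn_sub (f g : Lp ℝ 2 P) : ∫ x, (f - g) x ∂P = ∫ x, f x ∂P - ∫ x, g x ∂P := by
  rw [integral_congr_ae (Lp.coeFn_sub f g)]
  exact integral_sub ((Lp.memLp f).integrable one_le_two) ((Lp.memLp g).integrable one_le_two)

/-- Subtracting a constant from `d` does not change `⟪d, f⟫` when `f` is centred. -/
lemma inner_nonneg_of_ae_mul_nonneg {d f : Lp ℝ 2 P} (κ : ℝ) (hf : ∫ x, f x ∂P = 0)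
    (h : ∀ᵐ x ∂P, 0 ≤ (d x - κ) * f x) : 0 ≤ inner ℝ d f := by
  have hfi : Integrable f P := (Lp.memLp f).integrable one_le_two
  have hsplit : ∫ x, d x * f x ∂P = ∫ x, (d x - κ) * f x ∂P + κ * ∫ x, f x ∂P := by
    rw [← integral_const_mul, ← integral_add _ (hfi.const_mul κ)]
    · simp only [sub_mul, sub_add_cancel]
    · simp only [sub_mul]; exact (integrable_mul_of_L2 d f).sub (hfi.const_mul κ)
  rw [inner_eq_integral_mul, hsplit, hf, mul_zero, add_zero]
  exact integral_nonneg_of_ae h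

lemma add_smul_tangentBall_eq_floorSet {F : Lp ℝ 2 P} {f : Ω → ℝ} (hF : F =ᵐ[P] f) {r : ℝ}
    (hr : 0 < r) :
    {h : Lp ℝ 2 P | ∃ g ∈ {g : Lp ℝ 2 P | (∫ x, g x ∂P) = 0 ∧ ∀ᵐ x ∂P, -1 ≤ g x},
        h = F + r • g} = floorSet P (∫ x, f x ∂P) (fun x => f x - r) := by
  ext h
  have hsmul := Set.ext_iff.mp (smul_tangentBall_eq_floorSet (P := P) hr) (h - F)
  simp only [Set.mem_ofPred_eq, sub_eq_iff_eq_add'] at hsmul ⊢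
  rw [hsmul, floorSet, Set.mem_ofPred_eq, integral_coeFn_sub,
    integral_congr_ae hF, sub_eq_zero]
  refine and_congr_right' (eventually_congr ?_)
  filter_upwards [Lp.coeFn_sub h F, hF] with x e₁ e₂
  rw [e₁, Pi.sub_apply, e₂]
  constructor <;> intro <;> linarith

lemma disjoint_floorSet {m : ℝ} {φ₀ φ₁ : Ω → ℝ} (hφ₀ : Integrable φ₀ P) (hφ₁ : Integrable φ₁ P)
    (h : m < ∫ x, max (φ₀ x) (φ₁ x) ∂P) : Disjoint (floorSet P m φ₀) (floorSet P m φ₁) := by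
  refine Set.disjoint_left.mpr fun p ⟨hpm, hp₀⟩ ⟨_, hp₁⟩ => h.not_ge ?_
  rw [← hpm]
  refine integral_mono_ae (hφ₀.sup hφ₁) ((Lp.memLp p).integrable one_le_two) ?_
  filter_upwards [hp₀, hp₁] with x h₀ h₁ using max_le h₀ h₁

/-- `h₀, h₁` are the KKT conditions of minimising `‖p₁ - p₀‖` over the two floor sets, with
`κ₀, κ₁` the multipliers of the mean constraints. -/
theorem norm_sub_le_norm_sub_of_mem_floorSet {m₀ m₁ κ₀ κ₁ : ℝ} {φ₀ φ₁ : Ω → ℝ}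
    {q₀ q₁ p₀ p₁ : Lp ℝ 2 P} (hq₀ : ∫ x, q₀ x ∂P = m₀) (hq₁ : ∫ x, q₁ x ∂P = m₁)
    (hp₀ : p₀ ∈ floorSet P m₀ φ₀) (hp₁ : p₁ ∈ floorSet P m₁ φ₁)
    (h₀ : ∀ᵐ x ∂P, (q₁ - q₀) x ≤ κ₀ ∧ ((q₁ - q₀) x = κ₀ ∨ q₀ x = φ₀ x))
    (h₁ : ∀ᵐ x ∂P, κ₁ ≤ (q₁ - q₀) x ∧ ((q₁ - q₀) x = κ₁ ∨ q₁ x = φ₁ x)) :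
    ‖q₁ - q₀‖ ≤ ‖p₁ - p₀‖ := by
  refine norm_le_norm_of_inner_sub_nonneg ?_
  rw [show p₁ - p₀ - (q₁ - q₀) = (p₁ - q₁) + (q₀ - p₀) by abel, inner_add_right]
  refine add_nonneg (inner_nonneg_of_ae_mul_nonneg κ₁ ?_ ?_)
    (inner_nonneg_of_ae_mul_nonneg κ₀ ?_ ?_)
  · rw [integral_coeFn_sub, hp₁.1, hq₁, sub_self]
  · filter_upwards [h₁, hp₁.2, Lp.coeFn_sub p₁ q₁] with x ⟨hκ, hx⟩ hφ hsub
    rcases hx with hx | hx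
    · rw [hx, sub_self, zero_mul]
    · rw [hsub, Pi.sub_apply]
      exact mul_nonneg (sub_nonneg.mpr hκ) (by linarith)
  · rw [integral_coeFn_sub, hp₀.1, hq₀, sub_self]
  · filter_upwards [h₀, hp₀.2, Lp.coeFn_sub q₀ p₀] with x ⟨hκ, hx⟩ hφ hsub
    rcases hx with hx | hx
    · rw [hx, sub_self, zero_mul]
    · rw [hsub, Pi.sub_apply]
      exact mul_nonneg_of_nonpos_of_nonpos (sub_nonpos.mpr hκ) (by linarith)

theorem eq_of_sub_eq_of_floor {m₁ : ℝ} {φ₀ φ₁ : Ω → ℝ} {q₀ q₁ p₀ p₁ : Lp ℝ 2 P}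
    (hq₁ : ∫ x, q₁ x ∂P = m₁) (hp₀ : ∀ᵐ x ∂P, φ₀ x ≤ p₀ x) (hp₁ : p₁ ∈ floorSet P m₁ φ₁)
    (hq : ∀ᵐ x ∂P, q₀ x = φ₀ x ∨ q₁ x = φ₁ x) (heq : p₁ - p₀ = q₁ - q₀) :
    p₀ = q₀ ∧ p₁ = q₁ := by
  have hp := Lp.coeFn_sub p₁ p₀
  rw [heq] at hp
  have hle : (fun x => q₁ x) ≤ᵐ[P] fun x => p₁ x := by
    filter_upwards [hq, hp₀, hp₁.2, hp, Lp.coeFn_sub q₁ q₀] with x hx h₀ h₁ e₁ e₂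
    rw [e₂] at e₁
    simp only [Pi.sub_apply] at e₁
    rcases hx with hx | hx <;> linarith
  have hp₁q₁ : p₁ = q₁ := Lp.ext ((integral_eq_iff_of_ae_le ((Lp.memLp q₁).integrable one_le_two)
    ((Lp.memLp p₁).integrable one_le_two) hle).mp (hq₁.trans hp₁.1.symm)).symm
  subst hp₁q₁
  exact ⟨sub_right_injective heq, rfl⟩

end FloorSet

section Contamination

variable {Ω : Type*} [MeasurableSpace Ω] {P : Measure Ω} {ℓ : Ω → ℝ}
  {τ r₀ r₁ c' c'' : ℝ} {q₀ q₁ p₀ p₁ : Lp ℝ 2 P}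

lemma coeFn_sub_ae_eq_clip (hcc : c' ≤ c'')
    (hq₀ : (fun x => q₀ x) =ᵐ[P] fun x => τ * max (ℓ x - c'') 0 - r₀)
    (hq₁ : (fun x => q₁ x) =ᵐ[P] fun x => τ * max (ℓ x) c' - r₁) :
    (fun x => (q₁ - q₀) x) =ᵐ[P] fun x => τ * max c' (min (ℓ x) c'') - (r₁ - r₀) := by
  filter_upwards [Lp.coeFn_sub q₁ q₀, hq₀, hq₁] with x e e₀ e₁
  rw [e, Pi.sub_apply, e₀, e₁]
  linear_combination τ * max_sub_max_sub_zero_eq_max_min (a := ℓ x) hcc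

variable [IsProbabilityMeasure P]

lemma lt_integral_max_sub_zero_iff (hℓ : Integrable ℓ P) (hcent : ∫ x, ℓ x ∂P = 0) :
    r₀ < ∫ x, max (τ * ℓ x - (r₁ - r₀)) 0 ∂P ↔ r₁ < ∫ x, max ((r₁ - r₀) - τ * ℓ x) 0 ∂P := by
  have hf : Integrable (fun x => τ * ℓ x - (r₁ - r₀)) P :=
    (hℓ.const_mul τ).sub (integrable_const _)
  rw [integral_max_zero_eq_integral_max_neg_zero_add hf, integral_sub (hℓ.const_mul τ)
    (integrable_const _), integral_const_mul, hcent]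
  simp only [neg_sub, integral_const, probReal_univ, smul_eq_mul, one_mul]
  constructor <;> intro h <;> linarith

lemma disjoint_floorSet_of_lt_integral (hℓ : Integrable ℓ P)
    (hrad : r₀ < ∫ x, max (τ * ℓ x - (r₁ - r₀)) 0 ∂P) :
    Disjoint (floorSet P 0 fun _ => -r₀) (floorSet P 0 fun x => τ * ℓ x - r₁) := by
  have hf : Integrable (fun x => τ * ℓ x - (r₁ - r₀)) P :=
    (hℓ.const_mul τ).sub (integrable_const _)
  refine disjoint_floorSet (integrable_const _) ((hℓ.const_mul τ).sub (integrable_const _)) ?_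
  have e : ∀ x, max (-r₀) (τ * ℓ x - r₁) = max (τ * ℓ x - (r₁ - r₀)) 0 - r₀ := fun x => by
    simp only [max_def]
    split_ifs <;> linarith
  rw [integral_congr_ae (Eventually.of_forall e), integral_sub hf.pos_part (integrable_const _)]
  simp only [integral_const, probReal_univ, smul_eq_mul, one_mul]
  linarith

lemma mem_floorSet_of_ae_eq_posPart (hℓ : Integrable ℓ P) (hτ : 0 ≤ τ)
    (hc'' : τ * ∫ x, max (ℓ x - c'') 0 ∂P = r₀)
    (hq₀ : (fun x => q₀ x) =ᵐ[P] fun x => τ * max (ℓ x - c'') 0 - r₀) :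
    q₀ ∈ floorSet P 0 fun _ => -r₀ := by
  have hi : Integrable (fun x => max (ℓ x - c'') 0) P := (hℓ.sub (integrable_const _)).pos_part
  refine ⟨?_, ?_⟩
  · rw [integral_congr_ae hq₀, integral_sub (hi.const_mul τ) (integrable_const _),
      integral_const_mul, hc'']
    simp
  · filter_upwards [hq₀] with x hx
    rw [hx]
    linarith [mul_nonneg hτ (le_max_right (ℓ x - c'') 0)]

lemma mem_floorSet_of_ae_eq_max (hℓ : Integrable ℓ P) (hcent : ∫ x, ℓ x ∂P = 0) (hτ : 0 ≤ τ)
    (hc' : τ * ∫ x, max (c' - ℓ x) 0 ∂P = r₁)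
    (hq₁ : (fun x => q₁ x) =ᵐ[P] fun x => τ * max (ℓ x) c' - r₁) :
    q₁ ∈ floorSet P 0 fun x => τ * ℓ x - r₁ := by
  have e : ∀ x, τ * max (ℓ x) c' - r₁ = τ * ℓ x + τ * max (c' - ℓ x) 0 - r₁ := fun x => by
    rw [← mul_add]
    congr 2
    simp only [max_def]
    split_ifs <;> linarith
  refine ⟨?_, ?_⟩
  · rw [integral_congr_ae (hq₁.trans (Eventually.of_forall e)), integral_sub _ (integrable_const _),
      integral_add (hℓ.const_mul τ) ((integrable_max_sub_zero hℓ c').const_mul τ),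
      integral_const_mul, integral_const_mul, hcent, hc']
    · simp
    · exact (hℓ.const_mul τ).add ((integrable_max_sub_zero hℓ c').const_mul τ)
  · filter_upwards [hq₁] with x hx
    rw [hx]
    linarith [mul_le_mul_of_nonneg_left (le_max_left (ℓ x) c') hτ]

lemma norm_sub_le_of_ae_eq_clip (hτ : 0 ≤ τ) (hcc : c' ≤ c'')
    (hq₀ : (fun x => q₀ x) =ᵐ[P] fun x => τ * max (ℓ x - c'') 0 - r₀)
    (hq₁ : (fun x => q₁ x) =ᵐ[P] fun x => τ * max (ℓ x) c' - r₁)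
    (hq₀m : ∫ x, q₀ x ∂P = 0) (hq₁m : ∫ x, q₁ x ∂P = 0)
    (hp₀ : p₀ ∈ floorSet P 0 fun _ => -r₀) (hp₁ : p₁ ∈ floorSet P 0 fun x => τ * ℓ x - r₁) :
    ‖q₁ - q₀‖ ≤ ‖p₁ - p₀‖ := by
  refine norm_sub_le_norm_sub_of_mem_floorSet (κ₀ := τ * c'' - (r₁ - r₀))
    (κ₁ := τ * c' - (r₁ - r₀)) hq₀m hq₁m hp₀ hp₁ ?_ ?_
  · filter_upwards [coeFn_sub_ae_eq_clip hcc hq₀ hq₁, hq₀] with x hd h₀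
    rw [hd, h₀]
    refine ⟨by gcongr; exact max_le hcc (min_le_right _ _), ?_⟩
    rcases le_total (ℓ x) c'' with h | h
    · exact Or.inr (by rw [max_eq_right (by linarith)]; ring)
    · exact Or.inl (by rw [min_eq_right h, max_eq_right hcc])
  · filter_upwards [coeFn_sub_ae_eq_clip hcc hq₀ hq₁, hq₁] with x hd h₁
    rw [hd, h₁]
    refine ⟨by gcongr; exact le_max_left _ _, ?_⟩
    rcases le_total (ℓ x) c' with h | h
    · exact Or.inl (by rw [min_eq_left (h.trans hcc), max_eq_left h])
    · exact Or.inr (by rw [max_eq_left h])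

lemma eq_of_sub_eq_of_ae_eq_clip (hcc : c' ≤ c'')
    (hq₀ : (fun x => q₀ x) =ᵐ[P] fun x => τ * max (ℓ x - c'') 0 - r₀)
    (hq₁ : (fun x => q₁ x) =ᵐ[P] fun x => τ * max (ℓ x) c' - r₁) (hq₁m : ∫ x, q₁ x ∂P = 0)
    (hp₀ : ∀ᵐ x ∂P, -r₀ ≤ p₀ x) (hp₁ : p₁ ∈ floorSet P 0 fun x => τ * ℓ x - r₁)
    (heq : p₁ - p₀ = q₁ - q₀) : p₀ = q₀ ∧ p₁ = q₁ := by
  refine eq_of_sub_eq_of_floor hq₁m hp₀ hp₁ ?_ heq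
  filter_upwards [hq₀, hq₁] with x h₀ h₁
  rw [h₀, h₁]
  rcases le_total (ℓ x) c'' with h | h
  · exact Or.inl (by rw [max_eq_right (by linarith)]; ring)
  · exact Or.inr (by rw [max_eq_left (hcc.trans h)])

end Contamination

/-- for the contamination hypotheses `G₀ = r₀G_c` and
`G₁ = τΛ + r₁G_c`, under the radius condition `r₀ < E[(τΛ − (r₁−r₀))₊]`
(equivalent to `r₁ < E[((r₁−r₀) − τΛ)₊]`), the clipping constants
`c′ < z < c″` with `τE[(c′−Λ)₊] = r₁`, `τE[(Λ−c″)₊] = r₀` exist uniquely;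
the sets are disjoint, the minimum-norm element of `G₁ − G₀` is
`τ(c′ ∨ Λ ∧ c″) − (r₁ − r₀)`, and the unique realizing pair is
`q₀ = τ(Λ−c″)₊ − r₀`, `q₁ = τ(Λ ∨ c′) − r₁`. -/
theorem contamination_least_favorable_tangent_pair
    {Ω : Type*} [MeasurableSpace Ω] (P : Measure Ω) [IsProbabilityMeasure P]
    (Λ : Lp ℝ 2 P) (hcent : ∫ x, Λ x ∂P = 0)
    (τ r₀ r₁ z : ℝ) (hτ : 0 < τ) (h₀ : 0 < r₀) (h₁ : 0 < r₁)
    (hz : z = (r₁ - r₀) / τ)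
    (hrad : r₀ < ∫ x, max (τ * Λ x - (r₁ - r₀)) 0 ∂P)
    (Gc : Set (Lp ℝ 2 P))
    (hGc : Gc = {g : Lp ℝ 2 P | (∫ x, g x ∂P) = 0 ∧ ∀ᵐ x ∂P, -1 ≤ g x})
    (G₀ G₁ : Set (Lp ℝ 2 P))
    (hG₀ : G₀ = {h | ∃ g ∈ Gc, h = r₀ • g})
    (hG₁ : G₁ = {h | ∃ g ∈ Gc, h = τ • Λ + r₁ • g}) :
    (r₀ < (∫ x, max (τ * Λ x - (r₁ - r₀)) 0 ∂P) ↔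
      r₁ < ∫ x, max ((r₁ - r₀) - τ * Λ x) 0 ∂P) ∧
    (∃! c' : ℝ, c' < z ∧ τ * (∫ x, max (c' - Λ x) 0 ∂P) = r₁) ∧
    (∃! c'' : ℝ, z < c'' ∧ τ * (∫ x, max (Λ x - c'') 0 ∂P) = r₀) ∧
    (∀ c' c'' : ℝ, c' < z → z < c'' →
      τ * (∫ x, max (c' - Λ x) 0 ∂P) = r₁ →
      τ * (∫ x, max (Λ x - c'') 0 ∂P) = r₀ →
      ∀ q₀ q₁ : Lp ℝ 2 P,
        (fun x => q₀ x) =ᵐ[P] (fun x => τ * max (Λ x - c'') 0 - r₀) →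
        (fun x => q₁ x) =ᵐ[P] (fun x => τ * max (Λ x) c' - r₁) →
        Disjoint G₀ G₁ ∧
        q₀ ∈ G₀ ∧ q₁ ∈ G₁ ∧
        (fun x => (q₁ - q₀ : Lp ℝ 2 P) x) =ᵐ[P]
          (fun x => τ * max c' (min (Λ x) c'') - (r₁ - r₀)) ∧
        (q₁ - q₀ ∈ {d : Lp ℝ 2 P | ∃ g₀ ∈ G₀, ∃ g₁ ∈ G₁, d = g₁ - g₀} ∧
          ∀ d ∈ {d : Lp ℝ 2 P | ∃ g₀ ∈ G₀, ∃ g₁ ∈ G₁, d = g₁ - g₀},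
            ‖q₁ - q₀‖ ≤ ‖d‖) ∧
        (∀ p₀ ∈ G₀, ∀ p₁ ∈ G₁, p₁ - p₀ = q₁ - q₀ → p₀ = q₀ ∧ p₁ = q₁)) := by
  subst hz
  have hΛ : Integrable (fun x => Λ x) P := (Lp.memLp Λ).integrable one_le_two
  obtain rfl : G₀ = floorSet P 0 fun _ => -r₀ := by
    rw [hG₀, hGc, smul_tangentBall_eq_floorSet h₀]
  obtain rfl : G₁ = floorSet P 0 fun x => τ * Λ x - r₁ := by
    rw [hG₁, hGc, add_smul_tangentBall_eq_floorSet (Lp.coeFn_smul τ Λ) h₁]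
    simp only [Pi.smul_apply, smul_eq_mul, integral_const_mul, hcent, mul_zero]
  refine ⟨lt_integral_max_sub_zero_iff hΛ hcent, existsUnique_mul_lowerPartialMoment_eq hΛ hτ h₁ ?_,
    existsUnique_mul_upperPartialMoment_eq hΛ hτ h₀ ?_, ?_⟩
  · rw [mul_integral_max_zero hτ.le fun x => (r₁ - r₀) / τ - Λ x]
    simpa only [mul_sub, mul_div_cancel₀ _ hτ.ne']
      using (lt_integral_max_sub_zero_iff hΛ hcent).mp hrad
  · rw [mul_integral_max_zero hτ.le fun x => Λ x - (r₁ - r₀) / τ]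
    simpa only [mul_sub, mul_div_cancel₀ _ hτ.ne'] using hrad
  · intro c' c'' hc' hc'' hc'R hc''R q₀ q₁ hq₀ hq₁
    have hcc : c' ≤ c'' := by linarith
    have hq₀G := mem_floorSet_of_ae_eq_posPart hΛ hτ.le hc''R hq₀
    have hq₁G := mem_floorSet_of_ae_eq_max hΛ hcent hτ.le hc'R hq₁
    refine ⟨disjoint_floorSet_of_lt_integral hΛ hrad, hq₀G, hq₁G,
      coeFn_sub_ae_eq_clip hcc hq₀ hq₁, ⟨⟨q₀, hq₀G, q₁, hq₁G, rfl⟩, ?_⟩,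
      fun p₀ hp₀ p₁ hp₁ => eq_of_sub_eq_of_ae_eq_clip hcc hq₀ hq₁ hq₁G.1 hp₀.2 hp₁⟩
    rintro _ ⟨p₀, hp₀, p₁, hp₁, rfl⟩
    exact norm_sub_le_of_ae_eq_clip hτ.le hcc hq₀ hq₁ hq₀G.1 hq₁G.1 hp₀ hp₁
end
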